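/- The continuous relaxation of the single source/sink reliability MILP is exact: for any matrix A and nonzero vector d̂, the supremum of (1−y) over {(y,z) : y ∈ [0,1], z ≥ 0, A z = (1−y)·d̂} equals the supremum of (1−y) over the same set with the additional constraint y ∈ {0,1}. -/

import Mathlib

/-!
The values `t = 1 - y` for which `A z = t • d` has a solution `z ≥ 0` form a cone in `ℝ`:
they contain `0` and are closed under multiplication by nonnegative scalars. If `1` is among them,
both suprema are `1`; otherwise the cone meets `[0, 1]` only in `0`, and both suprema are `0`.
-/

open Set Matrix

section Cone

variable {S : Set ℝ}

theorem csSup_inter_Icc_eq_one (h1 : (1 : ℝ) ∈ S) : sSup (S ∩ Icc 0 1) = 1 :=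
  IsGreatest.csSup_eq ⟨⟨h1, by norm_num⟩, fun _ hx => hx.2.2⟩

theorem csSup_inter_pair_eq_one (h1 : (1 : ℝ) ∈ S) : sSup (S ∩ {0, 1}) = 1 :=
  IsGreatest.csSup_eq ⟨⟨h1, by simp⟩, fun _ ⟨_, hx⟩ => by rcases hx with rfl | rfl <;> norm_num⟩

theorem inter_Icc_eq_singleton_zero_of_one_notMem (h0 : 0 ∈ S)
    (hsmul : ∀ c t : ℝ, 0 ≤ c → t ∈ S → c * t ∈ S) (h1 : (1 : ℝ) ∉ S) :
    S ∩ Icc 0 1 = {0} := by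
  refine Subset.antisymm (fun t ⟨ht, ht0, _⟩ => ?_) (by simp [h0])
  by_contra hne
  have hpos : 0 < t := lt_of_le_of_ne ht0 (Ne.symm hne)
  exact h1 (inv_mul_cancel₀ hpos.ne' ▸ hsmul t⁻¹ t (inv_nonneg.mpr ht0) ht)

theorem csSup_inter_Icc_eq_csSup_inter_pair (h0 : 0 ∈ S)
    (hsmul : ∀ c t : ℝ, 0 ≤ c → t ∈ S → c * t ∈ S) :
    sSup (S ∩ Icc 0 1) = sSup (S ∩ {0, 1}) := by
  by_cases h1 : (1 : ℝ) ∈ S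
  · rw [csSup_inter_Icc_eq_one h1, csSup_inter_pair_eq_one h1]
  · have hpair : S ∩ {0, 1} = {0} := by
      refine Subset.antisymm (fun t ⟨ht, ht01⟩ => ?_) (by simp [h0])
      rcases ht01 with rfl | rfl
      · rfl
      · exact absurd ht h1
    rw [inter_Icc_eq_singleton_zero_of_one_notMem h0 hsmul h1, hpair]

end Cone

section FeasibleScales

variable {m n : ℕ} (A : Matrix (Fin m) (Fin n) ℝ) (d : Fin m → ℝ)

def feasibleScales : Set ℝ := {t | ∃ z : Fin n → ℝ, 0 ≤ z ∧ A *ᵥ z = t • d}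

theorem zero_mem_feasibleScales : 0 ∈ feasibleScales A d :=
  ⟨0, le_rfl, by simp⟩

theorem mul_mem_feasibleScales {c t : ℝ} (hc : 0 ≤ c) (ht : t ∈ feasibleScales A d) :
    c * t ∈ feasibleScales A d := by
  obtain ⟨z, hz, hAz⟩ := ht
  exact ⟨c • z, smul_nonneg hc hz, by rw [mulVec_smul, hAz, smul_smul]⟩

theorem setOf_feasible_eq (Y : Set ℝ) :
    {v : ℝ | ∃ (y : ℝ) (z : Fin n → ℝ), y ∈ Y ∧ 0 ≤ z ∧ A *ᵥ z = (1 - y) • d ∧ v = 1 - y} =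
      feasibleScales A d ∩ (fun t => 1 - t) ⁻¹' Y := by
  ext v
  constructor
  · rintro ⟨y, z, hy, hz, hAz, rfl⟩
    exact ⟨⟨z, hz, hAz⟩, by simpa using hy⟩
  · rintro ⟨⟨z, hz, hAz⟩, hv⟩
    exact ⟨1 - v, z, hv, hz, by simpa using hAz, by ring⟩

end FeasibleScales

theorem relaxation_exact_general {m n : ℕ}
    (A : Matrix (Fin m) (Fin n) ℝ) (d : Fin m → ℝ) :
    sSup {v : ℝ | ∃ (y : ℝ) (z : Fin n → ℝ),
        y ∈ Set.Icc (0 : ℝ) 1 ∧ 0 ≤ z ∧ A.mulVec z = (1 - y) • d ∧ v = 1 - y} =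
    sSup {v : ℝ | ∃ (y : ℝ) (z : Fin n → ℝ),
        y ∈ ({0, 1} : Set ℝ) ∧ 0 ≤ z ∧ A.mulVec z = (1 - y) • d ∧ v = 1 - y} := by
  have hpair : (fun t : ℝ => 1 - t) ⁻¹' {0, 1} = {0, 1} := by
    ext t
    simp only [mem_preimage, mem_insert_iff, mem_singleton_iff, sub_eq_zero, sub_eq_self]
    tauto
  rw [setOf_feasible_eq, setOf_feasible_eq, preimage_const_sub_Icc, sub_self, sub_zero, hpair]
  exact csSup_inter_Icc_eq_csSup_inter_pair (zero_mem_feasibleScales A d)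
    fun _ _ hc ht => mul_mem_feasibleScales A d hc ht

/-- Exactness of the continuous relaxation: for any matrix `A` and nonzero `d̂`, the
supremum of `1 - y` over the relaxed feasible set (`y ∈ [0,1]`) equals the supremum of
`1 - y` over the integer feasible set (`y ∈ {0,1}`). -/
theorem relaxation_exact {m n : ℕ}
    (A : Matrix (Fin m) (Fin n) ℝ) (d : Fin m → ℝ) (hd : d ≠ 0) :
    sSup {v : ℝ | ∃ (y : ℝ) (z : Fin n → ℝ),
        y ∈ Set.Icc (0 : ℝ) 1 ∧ 0 ≤ z ∧ A.mulVec z = (1 - y) • d ∧ v = 1 - y} =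
    sSup {v : ℝ | ∃ (y : ℝ) (z : Fin n → ℝ),
        y ∈ ({0, 1} : Set ℝ) ∧ 0 ≤ z ∧ A.mulVec z = (1 - y) • d ∧ v = 1 - y} :=
  relaxation_exact_general A d
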